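/- Let X ⊆ ℝ^D be a finite set with n ≥ 2 elements, let Y ⊆ ℝ^D be a finite nonempty set disjoint from X, set δ = min{κ(Y), d_E(X,Y)}, and let ε_* = min{ε > 0 : the ε-graph G_ε(X) is connected}. Assume δ > ε_* (i.e., Y is a set of geometric outliers) and let p > 1 satisfy (δ/ε_*)^p > n. Then the diameter of (X, d_{X,p}) is strictly less than δ^p, and consequently d_{X∪Y,p}(x,x') = d_{X,p}(x,x') for all x, x' ∈ X. -/

import Mathlib

/-- The cost of a polygonal path given by the list `l` of its vertices:
the sum over consecutive pairs of the `p`-th power of the Euclidean distance. -/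
noncomputable def chainCost {D : ℕ} (p : ℝ) (l : List (EuclideanSpace ℝ (Fin D))) : ℝ :=
  ((l.zip l.tail).map (fun q => dist q.1 q.2 ^ p)).sum

/-- The sample Fermat distance: `d_{S,p}(x,y)` is the infimum over all finite paths
`x = x₀, x₁, …, x_{r+1} = y` with interior points `x₁,…,x_r ∈ S` of
`Σ_{i=0}^{r} |x_{i+1} − x_i|^p`. -/
noncomputable def fermatDist {D : ℕ} (p : ℝ) (S : Finset (EuclideanSpace ℝ (Fin D)))
    (x y : EuclideanSpace ℝ (Fin D)) : ℝ :=
  sInf {c : ℝ | ∃ l : List (EuclideanSpace ℝ (Fin D)),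
    (∀ z ∈ l, z ∈ S) ∧ c = chainCost p (x :: (l ++ [y]))}

/-- The Euclidean distance `d_E(A,B) = min_{a ∈ A, b ∈ B} |a − b|` between finite sets. -/
noncomputable def setDistE {D : ℕ} (A B : Finset (EuclideanSpace ℝ (Fin D))) : ℝ :=
  sInf {d : ℝ | ∃ a ∈ A, ∃ b ∈ B, d = dist a b}

/-- The minimal spacing `κ(B) = min_{b ∈ B} d_E({b}, B∖{b})` of a finite set. -/
noncomputable def minSpacing {D : ℕ} (B : Finset (EuclideanSpace ℝ (Fin D))) : ℝ :=
  sInf {d : ℝ | ∃ b ∈ B, ∃ b' ∈ B, b ≠ b' ∧ d = dist b b'}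
noncomputable instance {D : ℕ} : DecidableEq (EuclideanSpace ℝ (Fin D)) := Classical.decEq _

/-- The `ε`-graph on a finite set `S ⊆ ℝ^D`: vertices are the points of `S`, with an edge
between distinct `u, v` whenever `|u − v| ≤ ε`. -/
def epsGraph {D : ℕ} (ε : ℝ) (S : Finset (EuclideanSpace ℝ (Fin D))) : SimpleGraph ↥S :=
  SimpleGraph.fromRel (fun u v => dist (u : EuclideanSpace ℝ (Fin D)) v ≤ ε)

/-- The minimal `ε > 0` for which the `ε`-graph on `S` is connected. -/
noncomputable def epsStar {D : ℕ} (S : Finset (EuclideanSpace ℝ (Fin D))) : ℝ :=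
  sInf {ε : ℝ | 0 < ε ∧ (epsGraph ε S).Connected}

/-! Chains inside `X` follow a path of the connected `ε`-graph, with fewer than `n = #X` edges, each
of cost at most `ε ^ p`; taking `ε` just above `ε_*` gives `d_{X,p} < n ε_*^p < δ ^ p`. A chain
through a point of `Y` must contain an edge from `X` to `Y`, which alone costs at least `δ ^ p`,
so such detours never shorten a chain between points of `X`. -/

open Finset

section Nonneg

variable {D : ℕ} {A B : Finset (EuclideanSpace ℝ (Fin D))}

lemma setDistE_nonneg : 0 ≤ setDistE A B :=
  Real.sInf_nonneg (by rintro _ ⟨a, -, b, -, rfl⟩; exact dist_nonneg)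

lemma setDistE_le_dist {a b : EuclideanSpace ℝ (Fin D)} (ha : a ∈ A) (hb : b ∈ B) :
    setDistE A B ≤ dist a b :=
  csInf_le ⟨0, by rintro _ ⟨a, -, b, -, rfl⟩; exact dist_nonneg⟩ ⟨a, ha, b, hb, rfl⟩

lemma minSpacing_nonneg : 0 ≤ minSpacing B :=
  Real.sInf_nonneg (by rintro _ ⟨b, -, b', -, -, rfl⟩; exact dist_nonneg)

lemma epsStar_nonneg : 0 ≤ epsStar B :=
  Real.sInf_nonneg fun _ h => h.1.le

end Nonneg

section Chains

variable {D : ℕ} {p : ℝ}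

lemma chainCost_pair (u v : EuclideanSpace ℝ (Fin D)) :
    chainCost p [u, v] = dist u v ^ p := by
  simp [chainCost]

lemma chainCost_cons_cons (u v : EuclideanSpace ℝ (Fin D)) (l : List (EuclideanSpace ℝ (Fin D))) :
    chainCost p (u :: v :: l) = dist u v ^ p + chainCost p (v :: l) := by
  simp [chainCost]

lemma chainCost_nonneg (l : List (EuclideanSpace ℝ (Fin D))) : 0 ≤ chainCost p l := by
  refine List.sum_nonneg fun c hc => ?_
  obtain ⟨q, -, rfl⟩ := List.mem_map.1 hc
  exact Real.rpow_nonneg dist_nonneg p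

lemma rpow_le_chainCost_of_crosses {δ : ℝ} (hp : 0 ≤ p) (hδ : 0 ≤ δ)
    {X Y : Finset (EuclideanSpace ℝ (Fin D))} (hXY : ∀ a ∈ X, ∀ b ∈ Y, δ ≤ dist a b) :
    ∀ (l : List (EuclideanSpace ℝ (Fin D))) {a : EuclideanSpace ℝ (Fin D)}, a ∈ X →
      (∀ z ∈ l, z ∈ X ∪ Y) → (∃ z ∈ l, z ∈ Y) → δ ^ p ≤ chainCost p (a :: l)
  | [], _, _, _, ⟨_, hz, _⟩ => absurd hz List.not_mem_nil
  | b :: t, a, ha, hl, hcross => by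
    rw [chainCost_cons_cons]
    by_cases hb : b ∈ Y
    · have := chainCost_nonneg (p := p) (b :: t)
      linarith [Real.rpow_le_rpow hδ (hXY a ha b hb) hp]
    · have hbX : b ∈ X := (mem_union.1 (hl b List.mem_cons_self)).resolve_right hb
      obtain ⟨z, hz, hzY⟩ := hcross
      have hzt : z ∈ t := (List.mem_cons.1 hz).resolve_left fun h => hb (h ▸ hzY)
      have := rpow_le_chainCost_of_crosses hp hδ hXY t hbX
        (fun w hw => hl w (List.mem_cons_of_mem _ hw)) ⟨z, hzt, hzY⟩
      linarith [Real.rpow_nonneg (dist_nonneg (x := a) (y := b)) p]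

end Chains

section FermatDist

variable {D : ℕ} {p : ℝ} {S T : Finset (EuclideanSpace ℝ (Fin D))} {x y : EuclideanSpace ℝ (Fin D)}

lemma fermatDist_le_chainCost {l : List (EuclideanSpace ℝ (Fin D))} (hl : ∀ z ∈ l, z ∈ S) :
    fermatDist p S x y ≤ chainCost p (x :: (l ++ [y])) :=
  csInf_le ⟨0, by rintro c ⟨l, -, rfl⟩; exact chainCost_nonneg _⟩ ⟨l, hl, rfl⟩

lemma le_fermatDist {c : ℝ}
    (h : ∀ l : List (EuclideanSpace ℝ (Fin D)), (∀ z ∈ l, z ∈ S) →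
      c ≤ chainCost p (x :: (l ++ [y]))) :
    c ≤ fermatDist p S x y :=
  le_csInf ⟨_, [], by simp, rfl⟩ (by rintro c ⟨l, hl, rfl⟩; exact h l hl)

lemma fermatDist_anti (hST : S ⊆ T) : fermatDist p T x y ≤ fermatDist p S x y :=
  le_fermatDist fun _ hl => fermatDist_le_chainCost fun z hz => hST (hl z hz)

lemma exists_chainCost_le_length_mul {ε : ℝ} (hp : 0 < p) {a b : S} :
    ∀ w : (epsGraph ε S).Walk a b, ∃ l : List (EuclideanSpace ℝ (Fin D)), (∀ z ∈ l, z ∈ S) ∧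
      chainCost p ((a : EuclideanSpace ℝ (Fin D)) :: (l ++ [(b : EuclideanSpace ℝ (Fin D))]))
        ≤ w.length * ε ^ p
  | .nil => ⟨[], by simp, by simp [chainCost_pair, Real.zero_rpow hp.ne']⟩
  | .cons (v := v) hadj w => by
    obtain ⟨l, hl, hcost⟩ := exists_chainCost_le_length_mul hp w
    refine ⟨v :: l, List.forall_mem_cons.2 ⟨v.2, hl⟩, ?_⟩
    have hedge : dist (a : EuclideanSpace ℝ (Fin D)) v ≤ ε := by
      simp only [epsGraph, SimpleGraph.fromRel_adj] at hadj
      exact hadj.2.elim id fun h => dist_comm (v : EuclideanSpace ℝ (Fin D)) a ▸ h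
    rw [List.cons_append, chainCost_cons_cons, SimpleGraph.Walk.length_cons]
    push_cast
    linarith [Real.rpow_le_rpow dist_nonneg hedge hp.le]

lemma fermatDist_lt_card_mul {ε : ℝ} (hp : 0 < p) (hε : 0 < ε) (hconn : (epsGraph ε S).Connected)
    (hx : x ∈ S) (hy : y ∈ S) :
    fermatDist p S x y < #S * ε ^ p := by
  obtain ⟨w⟩ := hconn.preconnected ⟨x, hx⟩ ⟨y, hy⟩
  let path := w.toPath
  obtain ⟨l, hl, hcost⟩ := exists_chainCost_le_length_mul hp path.val
  have hlen : (path.val.length : ℝ) < #S := by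
    exact_mod_cast Fintype.card_coe S ▸ path.property.length_lt
  calc fermatDist p S x y ≤ chainCost p (x :: (l ++ [y])) := fermatDist_le_chainCost hl
    _ ≤ path.val.length * ε ^ p := hcost
    _ < #S * ε ^ p := mul_lt_mul_of_pos_right hlen (Real.rpow_pos_of_pos hε p)

lemma lt_div_rpow_iff_lt_div {n δ ε : ℝ} (hp : 0 < p) (hn : 0 < n) (hδ : 0 ≤ δ) (hε : 0 < ε) :
    n < (δ / ε) ^ p ↔ ε < δ / n ^ p⁻¹ := by
  rw [← Real.rpow_inv_lt_iff_of_pos hn.le (div_nonneg hδ hε.le) hp,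
    lt_div_iff₀ (Real.rpow_pos_of_pos hn _), lt_div_iff₀ hε, mul_comm]

lemma fermatDist_lt_rpow_of_card_lt {δ : ℝ} (hp : 0 < p) (hδ : 0 ≤ δ) (hε : 0 < epsStar S)
    (hcard : #S < (δ / epsStar S) ^ p) (hx : x ∈ S) (hy : y ∈ S) :
    fermatDist p S x y < δ ^ p := by
  have hn : (0 : ℝ) < #S := by exact_mod_cast card_pos.2 ⟨x, hx⟩
  have hne : {ε : ℝ | 0 < ε ∧ (epsGraph ε S).Connected}.Nonempty :=
    Set.nonempty_iff_ne_empty.2 fun h => hε.ne' (by rw [epsStar, h, Real.sInf_empty])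
  rw [lt_div_rpow_iff_lt_div hp hn hδ hε] at hcard
  obtain ⟨ε, ⟨hε0, hconn⟩, hεlt⟩ := exists_lt_of_csInf_lt hne hcard
  rw [← lt_div_rpow_iff_lt_div hp hn hδ hε0, Real.div_rpow hδ hε0.le,
    lt_div_iff₀ (Real.rpow_pos_of_pos hε0 p)] at hεlt
  exact (fermatDist_lt_card_mul hp hε0 hconn hx hy).trans hεlt

lemma fermatDist_union_eq_of_lt_rpow {X Y : Finset (EuclideanSpace ℝ (Fin D))} {δ : ℝ}
    (hp : 0 ≤ p) (hδ : 0 ≤ δ) (hXY : ∀ a ∈ X, ∀ b ∈ Y, δ ≤ dist a b) (hx : x ∈ X) (hy : y ∈ X)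
    (hlt : fermatDist p X x y < δ ^ p) :
    fermatDist p (X ∪ Y) x y = fermatDist p X x y := by
  refine le_antisymm (fermatDist_anti subset_union_left) (le_fermatDist fun l hl => ?_)
  by_cases hcross : ∃ z ∈ l, z ∈ Y
  · refine hlt.le.trans (rpow_le_chainCost_of_crosses hp hδ hXY _ hx ?_ ?_)
    · exact fun z hz => (List.mem_append.1 hz).elim (hl z) fun h =>
        List.mem_singleton.1 h ▸ mem_union_left Y hy
    · obtain ⟨z, hz, hzY⟩ := hcross
      exact ⟨z, List.mem_append_left _ hz, hzY⟩
  · simp only [not_exists, not_and] at hcross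
    exact fermatDist_le_chainCost fun z hz => (mem_union.1 (hl z hz)).resolve_right (hcross z hz)

end FermatDist

theorem fermatDist_outliers_diam_general {D : ℕ} (p : ℝ) (hp : 1 < p)
    (X Y : Finset (EuclideanSpace ℝ (Fin D)))
    (hpow : (X.card : ℝ) < (min (minSpacing Y) (setDistE X Y) / epsStar X) ^ p) :
    (∀ x ∈ X, ∀ x' ∈ X,
        fermatDist p X x x' < min (minSpacing Y) (setDistE X Y) ^ p) ∧
    (∀ x ∈ X, ∀ x' ∈ X,
        fermatDist p (X ∪ Y) x x' = fermatDist p X x x') := by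
  set δ := min (minSpacing Y) (setDistE X Y)
  have hp0 : 0 < p := one_pos.trans hp
  have hδ : 0 ≤ δ := le_min minSpacing_nonneg setDistE_nonneg
  have hratio : 0 < δ / epsStar X := by
    refine (div_nonneg hδ epsStar_nonneg).lt_of_ne fun h => ?_
    rw [← h, Real.zero_rpow hp0.ne'] at hpow
    exact (Nat.cast_nonneg _).not_gt hpow
  have hε : 0 < epsStar X := epsStar_nonneg.lt_of_ne fun h => by simp [← h] at hratio
  have hdiam : ∀ x ∈ X, ∀ x' ∈ X, fermatDist p X x x' < δ ^ p := fun x hx x' hx' =>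
    fermatDist_lt_rpow_of_card_lt hp0 hδ hε hpow hx hx'
  have hXY : ∀ a ∈ X, ∀ b ∈ Y, δ ≤ dist a b := fun a ha b hb =>
    (min_le_right _ _).trans (setDistE_le_dist ha hb)
  exact ⟨hdiam, fun x hx x' hx' =>
    fermatDist_union_eq_of_lt_rpow hp0.le hδ hXY hx hx' (hdiam x hx x' hx')⟩

/-- if `Y` is a set of geometric outliers for the `n`-point sample `X`
(that is, `δ = min{κ(Y), d_E(X,Y)} > ε_*`, the connectivity threshold of `X`) and `p > 1`
satisfies `(δ/ε_*)^p > n`, then the diameter of `(X, d_{X,p})` is strictly less than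
`δ^p`, and consequently `d_{X∪Y,p} = d_{X,p}` on `X × X`. -/
theorem fermatDist_outliers_diam {D : ℕ} (p : ℝ) (hp : 1 < p)
    (X Y : Finset (EuclideanSpace ℝ (Fin D)))
    (hcard : 2 ≤ X.card) (hY : Y.Nonempty) (hdisj : Disjoint X Y)
    (hout : epsStar X < min (minSpacing Y) (setDistE X Y))
    (hpow : (X.card : ℝ) < (min (minSpacing Y) (setDistE X Y) / epsStar X) ^ p) :
    (∀ x ∈ X, ∀ x' ∈ X,
        fermatDist p X x x' < min (minSpacing Y) (setDistE X Y) ^ p) ∧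
    (∀ x ∈ X, ∀ x' ∈ X,
        fermatDist p (X ∪ Y) x x' = fermatDist p X x x') :=
  fermatDist_outliers_diam_general p hp X Y hpow
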